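/- arXiv:math/0507363 — 2 statements merged into one kernel-verified Lean document; each statement's English description precedes it below -/
import Mathlib

section
/- The group F₂ × F₂ (the direct product of two free groups of rank 2) is not coherent: it contains a finitely generated subgroup that is not finitely presented. -/
def FinitelyPresentedGroup (G : Type*) [Group G] : Prop :=
  ∃ (n : ℕ) (rels : Finset (FreeGroup (Fin n))),
    Nonempty (PresentedGroup (rels : Set (FreeGroup (Fin n))) ≃* G)

/-- A group is coherent if every finitely generated subgroup is finitely presented. -/
def IsCoherentGroup (G : Type*) [Group G] : Prop :=
  ∀ H : Subgroup G, Group.FG H → FinitelyPresentedGroup H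

/-!
Let `a, b` generate `F₂`. The subgroup `H ≤ F₂ × F₂` generated by `t = (a, a)`, `y = (b, 1)` and
`z = (1, b)` is the semidirect product `(F_∞ × F_∞) ⋊ ℤ`, where `F_∞` is free on the conjugates
`xᵢ = aⁱ b a⁻ⁱ` (`i ∈ ℤ`) and `ℤ` shifts the index in both factors. Its universal property shows that
`H = ⟨t, y, z | [y, tⁿ z t⁻ⁿ], n ∈ ℤ⟩`. If `H` were finitely presented, finitely many of these
relators, say those with `n ≤ N`, would normally generate all the others. But the permutations
`t ↦ (i ↦ 1 + i)`, `y ↦ (0 1)`, `z ↦ (-N-2, -N-1)` of `ℤ` satisfy the relators with `n ≤ N` and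
violate the one with `n = N + 1`.
-/

open Subgroup in
theorem Subgroup.exists_finset_normalClosure_image_eq {G ι : Type*} [Group G] (r : ι → G)
    (h : (normalClosure (Set.range r)).IsFinitelyNormallyGenerated) :
    ∃ s : Finset ι, normalClosure (r '' s) = normalClosure (Set.range r) := by
  obtain ⟨F, hF, hFr⟩ := h
  have hdir : Directed (· ≤ ·) fun s : Finset ι ↦ normalClosure (r '' s) :=
    Monotone.directed_le fun s t hst ↦ normalClosure_mono (Set.image_mono hst)
  have hcover : normalClosure (Set.range r) ≤ ⨆ s : Finset ι, normalClosure (r '' s) := by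
    refine (closure_le _).mpr fun x hx ↦ ?_
    obtain ⟨_, ⟨i, rfl⟩, hix⟩ := Group.mem_conjugatesOfSet_iff.mp hx
    refine le_iSup (fun s : Finset ι ↦ normalClosure (r '' s)) {i} ?_
    exact conjugatesOfSet_subset_normalClosure
      (Group.mem_conjugatesOfSet_iff.mpr ⟨r i, by simp, hix⟩)
  obtain ⟨s, hs⟩ := Directed.exists_mem_subset_of_finset_subset_biUnion
    (f := fun s : Finset ι ↦ (normalClosure (r '' s) : Set G)) hdir (s := hF.toFinset) <| by
      rw [← coe_iSup_of_directed hdir, hF.coe_toFinset]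
      exact fun x hx ↦ hcover (hFr ▸ subset_normalClosure hx)
  refine ⟨s, le_antisymm (normalClosure_mono (Set.image_subset_range _ _)) ?_⟩
  rw [← hFr]
  exact normalClosure_le_normal (by simpa using hs)

theorem FreeGroup.exists_comp_eq_of_surjective {α H G : Type*} [Group H] [Group G]
    {π : H →* G} (hπ : Function.Surjective π) (φ : FreeGroup α →* G) :
    ∃ ρ : FreeGroup α →* H, π.comp ρ = φ :=
  ⟨FreeGroup.lift (Function.surjInv hπ ∘ φ ∘ FreeGroup.of),
    FreeGroup.ext_hom _ _ fun a ↦ by simp [Function.surjInv_eq hπ]⟩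

open Subgroup in
theorem Group.IsFinitelyPresented.isFinitelyNormallyGenerated_ker {G α : Type*} [Group G]
    [Finite α] [hG : Group.IsFinitelyPresented G] (π : FreeGroup α →* G)
    (hπ : Function.Surjective π) : π.ker.IsFinitelyNormallyGenerated := by
  obtain ⟨n, φ, hφ, S, hS, hSφ⟩ := hG
  obtain ⟨ρ, hρ⟩ := FreeGroup.exists_comp_eq_of_surjective hπ φ
  obtain ⟨ψ, hψ⟩ := FreeGroup.exists_comp_eq_of_surjective hφ π
  set D := Set.range fun a ↦ FreeGroup.of a / ρ (ψ (FreeGroup.of a))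
  have hρψ (w) : π (ρ (ψ w)) = π w := by
    rw [← MonoidHom.comp_apply π ρ, hρ, ← MonoidHom.comp_apply, hψ]
  -- Modulo the relators `a / ρ (ψ a)`, every word agrees with its image under `ρ ∘ ψ`.
  refine ⟨ρ '' S ∪ D, (hS.image ρ).union (Set.finite_range _), le_antisymm ?_ ?_⟩
  · refine normalClosure_le_normal ?_
    rintro _ (⟨s, hs, rfl⟩ | ⟨a, rfl⟩)
    · rw [SetLike.mem_coe, MonoidHom.mem_ker, ← MonoidHom.comp_apply, hρ, ← MonoidHom.mem_ker,
        ← hSφ]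
      exact subset_normalClosure hs
    · simp [hρψ]
  · set N := normalClosure (ρ '' S ∪ D)
    have hmod : (QuotientGroup.mk' N).comp (ρ.comp ψ) = QuotientGroup.mk' N := by
      refine FreeGroup.ext_hom _ _ fun a ↦ ?_
      have : FreeGroup.of a / ρ (ψ (FreeGroup.of a)) ∈ N :=
        subset_normalClosure (Or.inr ⟨a, rfl⟩)
      simpa [QuotientGroup.eq_iff_div_mem, eq_comm] using this
    intro w hw
    have hψw : ψ w ∈ normalClosure S := by
      rw [hSφ, MonoidHom.mem_ker, ← MonoidHom.comp_apply, hψ]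
      exact hw
    have hρS : normalClosure S ≤ N.comap ρ :=
      normalClosure_le_normal fun s hs ↦ subset_normalClosure (Or.inl ⟨s, hs, rfl⟩)
    rw [← QuotientGroup.eq_one_iff (N := N), ← QuotientGroup.mk'_apply, ← hmod]
    exact (QuotientGroup.eq_one_iff _).mpr (hρS hψw)

theorem FinitelyPresentedGroup.isFinitelyPresented {G : Type*} [Group G]
    (h : FinitelyPresentedGroup G) : Group.IsFinitelyPresented G := by
  obtain ⟨n, rels, ⟨e⟩⟩ := h
  exact .equiv e

theorem Equiv.addLeft_one_zpow (n : ℤ) : Equiv.addLeft (1 : ℤ) ^ n = Equiv.addLeft n := by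
  induction n using Int.induction_on with
  | zero => ext; simp
  | succ k ih => rw [zpow_add_one, ih]; ext; simp
  | pred k ih => rw [zpow_sub_one, ih]; ext; simp [sub_eq_add_neg]

open FreeGroup in
def shiftAut : Multiplicative ℤ →* MulAut (FreeGroup ℤ) where
  toFun g := freeGroupCongr (Equiv.addLeft g.toAdd)
  map_one' := by ext; simp
  map_mul' g h := by
    rw [MulAut.mul_def, freeGroupCongr_trans]
    congr 1
    ext i
    simp

@[simp]
theorem shiftAut_apply_of (g : Multiplicative ℤ) (i : ℤ) :
    shiftAut g (FreeGroup.of i) = FreeGroup.of (g.toAdd + i) := by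
  simp [shiftAut]

def MulAut.prodDiag {G N : Type*} [Group G] [Group N] (φ : G →* MulAut N) :
    G →* MulAut (N × N) where
  toFun g := MulEquiv.prodCongr (φ g) (φ g)
  map_one' := by ext <;> simp [MulEquiv.prodCongr]
  map_mul' g h := by ext <;> simp [MulEquiv.prodCongr]

@[simp]
theorem MulAut.prodDiag_apply {G N : Type*} [Group G] [Group N] (φ : G →* MulAut N) (g : G)
    (x : N × N) : prodDiag φ g x = (φ g x.1, φ g x.2) := by
  simp [prodDiag, MulEquiv.prodCongr, Prod.map]

namespace SemidirectProduct

variable {N G : Type*} [Group N] [Group G]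

theorem inr_ofAdd_one_zpow_conj (φ : Multiplicative ℤ →* MulAut N) (n : ℤ) (x : N) :
    (inr (.ofAdd 1) : N ⋊[φ] _) ^ n * inl x * (inr (.ofAdd 1) ^ n)⁻¹ = inl (φ (.ofAdd n) x) := by
  rw [← map_zpow, ← ofAdd_zsmul, smul_eq_mul, mul_one, ← map_inv, ← inl_aut]

variable (φ : G →* MulAut N)

def toProd : (N × N) ⋊[MulAut.prodDiag φ] G →* (N ⋊[φ] G) × (N ⋊[φ] G) :=
  lift (inl.prodMap inl) (inr.prod inr) fun g ↦ by ext ⟨n₁, n₂⟩ <;> simp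

theorem toProd_injective : Function.Injective (toProd φ) := by
  rw [injective_iff_map_eq_one]
  intro x hx
  simp only [toProd, lift, MonoidHom.coe_mk, OneHom.coe_mk, MonoidHom.prodMap, Prod.ext_iff,
    SemidirectProduct.ext_iff] at hx ⊢
  simp_all

end SemidirectProduct

theorem FreeGroup.commute_lift_lift {α β G : Type*} [Group G] {f : α → G} {g : β → G}
    (h : ∀ a b, Commute (f a) (g b)) (u : FreeGroup α) (v : FreeGroup β) :
    Commute (FreeGroup.lift f u) (FreeGroup.lift g v) := by
  have hle : (FreeGroup.lift g).range ≤ Subgroup.centralizer (FreeGroup.lift f).range := by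
    rw [FreeGroup.range_lift_eq_closure, FreeGroup.range_lift_eq_closure,
      Subgroup.centralizer_closure, Subgroup.closure_le]
    rintro _ ⟨b, rfl⟩ _ ⟨a, rfl⟩
    exact (h a b).eq
  exact hle ⟨v, rfl⟩ _ ⟨u, rfl⟩

section ConjOrbit

variable {G : Type*} [Group G]

def conjOrbitLift (T X : G) : FreeGroup ℤ →* G :=
  FreeGroup.lift fun i ↦ T ^ i * X * (T ^ i)⁻¹

@[simp]
theorem conjOrbitLift_of (T X : G) (i : ℤ) :
    conjOrbitLift T X (FreeGroup.of i) = T ^ i * X * (T ^ i)⁻¹ :=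
  FreeGroup.lift_apply_of

theorem conjOrbitLift_shiftAut (T X : G) (g : Multiplicative ℤ) (u : FreeGroup ℤ) :
    conjOrbitLift T X (shiftAut g u) = T ^ g.toAdd * conjOrbitLift T X u * (T ^ g.toAdd)⁻¹ := by
  have : (conjOrbitLift T X).comp (shiftAut g).toMonoidHom =
      (MulAut.conj (T ^ g.toAdd)).toMonoidHom.comp (conjOrbitLift T X) :=
    FreeGroup.ext_hom _ _ fun i ↦ by
      simp only [MonoidHom.comp_apply, MulEquiv.coe_toMonoidHom, shiftAut_apply_of,
        conjOrbitLift_of, MulAut.conj_apply, zpow_add]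
      group
  exact DFunLike.congr_fun this u

theorem commute_conjOrbitLift {T X Y : G} (h : ∀ n : ℤ, Commute X (T ^ n * Y * (T ^ n)⁻¹))
    (u v : FreeGroup ℤ) : Commute (conjOrbitLift T X u) (conjOrbitLift T Y v) := by
  refine FreeGroup.commute_lift_lift (fun i j ↦ ?_) u v
  have hj : T ^ j * Y * (T ^ j)⁻¹ = T ^ i * (T ^ (j - i) * Y * (T ^ (j - i))⁻¹) * (T ^ i)⁻¹ := by
    group
  rw [hj, Commute.conj_iff]
  exact h (j - i)

end ConjOrbit

abbrev FreeByCyclic : Type := FreeGroup ℤ ⋊[shiftAut] Multiplicative ℤ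

namespace FreeByCyclic

open SemidirectProduct

def toFreeGroup : FreeByCyclic →* FreeGroup (Fin 2) :=
  lift (conjOrbitLift (.of 0) (.of 1)) (zpowersHom _ (.of 0)) fun g ↦
    MonoidHom.ext fun u ↦ by
      simp only [MonoidHom.comp_apply, MulEquiv.coe_toMonoidHom, conjOrbitLift_shiftAut,
        zpowersHom_apply, MulAut.conj_apply]

def ofFreeGroup : FreeGroup (Fin 2) →* FreeByCyclic :=
  FreeGroup.lift ![inr (.ofAdd 1), inl (.of 0)]

theorem ofFreeGroup_comp_toFreeGroup : ofFreeGroup.comp toFreeGroup = .id _ := by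
  refine hom_ext (FreeGroup.ext_hom _ _ fun i ↦ ?_) (MonoidHom.ext_mint ?_)
  · simp [toFreeGroup, ofFreeGroup, inr_ofAdd_one_zpow_conj]
  · simp [toFreeGroup, ofFreeGroup]

theorem toFreeGroup_injective : Function.Injective toFreeGroup :=
  Function.LeftInverse.injective (DFunLike.congr_fun ofFreeGroup_comp_toFreeGroup)

end FreeByCyclic

open scoped commutatorElement

-- The generators `0, 1, 2` of `FreeGroup (Fin 3)` play the roles of `t, y, z`.
def relator (n : ℤ) : FreeGroup (Fin 3) :=
  ⁅(FreeGroup.of 1 : FreeGroup (Fin 3)), .of 0 ^ n * .of 2 * (.of 0 ^ n)⁻¹⁆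

abbrev FreePairByCyclic : Type :=
  (FreeGroup ℤ × FreeGroup ℤ) ⋊[MulAut.prodDiag shiftAut] Multiplicative ℤ

namespace FreePairByCyclic

open SemidirectProduct

def ofFree : FreeGroup (Fin 3) →* FreePairByCyclic :=
  FreeGroup.lift ![inr (.ofAdd 1), inl (.of 0, 1), inl (1, .of 0)]

theorem ofFree_relator (n : ℤ) : ofFree (relator n) = 1 := by
  have hconj : ofFree (.of 0 ^ n * .of 2 * (.of 0 ^ n)⁻¹) = inl (1, .of n) := by
    simp [ofFree, inr_ofAdd_one_zpow_conj]
  rw [relator, map_commutatorElement, hconj, commutatorElement_eq_one_iff_commute]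
  exact ((Commute.one_right _).prod (Commute.one_left _)).map inl

abbrev RelatorGroup : Type := PresentedGroup (Set.range relator)

theorem relatorGroup_commute (n : ℤ) :
    Commute (PresentedGroup.of 1 : RelatorGroup)
      (PresentedGroup.of 0 ^ n * PresentedGroup.of 2 * (PresentedGroup.of 0 ^ n)⁻¹) := by
  have := PresentedGroup.one_of_mem (Set.mem_range_self (f := relator) n)
  rwa [relator, map_commutatorElement, commutatorElement_eq_one_iff_commute] at this

def toPresented : FreePairByCyclic →* RelatorGroup :=
  lift ((conjOrbitLift (.of 0 : RelatorGroup) (.of 1)).noncommCoprod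
      (conjOrbitLift (.of 0 : RelatorGroup) (.of 2)) (commute_conjOrbitLift relatorGroup_commute))
    (zpowersHom _ (.of 0)) fun g ↦ MonoidHom.ext fun ⟨u, v⟩ ↦ by
      simp only [MonoidHom.comp_apply, MulEquiv.coe_toMonoidHom, MulAut.prodDiag_apply,
        MonoidHom.noncommCoprod_apply, conjOrbitLift_shiftAut, zpowersHom_apply,
        MulAut.conj_apply]
      group

theorem toPresented_comp_ofFree : toPresented.comp ofFree = PresentedGroup.mk _ := by
  refine FreeGroup.ext_hom _ _ fun i ↦ ?_
  fin_cases i <;> simp [toPresented, ofFree, PresentedGroup.of]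

theorem ker_ofFree : ofFree.ker = Subgroup.normalClosure (Set.range relator) := by
  refine le_antisymm (fun w hw ↦ ?_) ?_
  · rw [← PresentedGroup.mk_eq_one_iff, ← toPresented_comp_ofFree, MonoidHom.comp_apply,
      MonoidHom.mem_ker.mp hw, map_one]
  · exact Subgroup.normalClosure_le_normal (Set.range_subset_iff.mpr ofFree_relator)

def toFreeGroupProd : FreePairByCyclic →* FreeGroup (Fin 2) × FreeGroup (Fin 2) :=
  (FreeByCyclic.toFreeGroup.prodMap FreeByCyclic.toFreeGroup).comp (toProd shiftAut)

theorem toFreeGroupProd_injective : Function.Injective toFreeGroupProd :=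
  (FreeByCyclic.toFreeGroup_injective.prodMap FreeByCyclic.toFreeGroup_injective).comp
    (toProd_injective shiftAut)

end FreePairByCyclic

def swapWitness (N : ℤ) : FreeGroup (Fin 3) →* Equiv.Perm ℤ :=
  FreeGroup.lift ![Equiv.addLeft 1, Equiv.swap 0 1, Equiv.swap (-N - 2) (-N - 1)]

theorem swapWitness_relator (N n : ℤ) :
    swapWitness N (relator n) = ⁅Equiv.swap (0 : ℤ) 1, Equiv.swap (n - N - 2) (n - N - 1)⁆ := by
  simp only [relator, map_commutatorElement, map_mul, map_inv, map_zpow, swapWitness,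
    FreeGroup.lift_apply_of, Matrix.cons_val_zero, Matrix.cons_val_one, Matrix.cons_val_two,
    Matrix.head_cons, Matrix.tail_cons]
  rw [Equiv.addLeft_one_zpow, ← Equiv.swap_apply_apply, Equiv.coe_addLeft]
  ring_nf

theorem swapWitness_relator_of_le {N n : ℤ} (hn : n ≤ N) : swapWitness N (relator n) = 1 := by
  rw [swapWitness_relator, commutatorElement_eq_one_iff_commute]
  exact (Equiv.Perm.disjoint_swap_swap (by simp; omega)).commute

theorem swapWitness_relator_succ_ne_one (N : ℤ) : swapWitness N (relator (N + 1)) ≠ 1 := by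
  rw [swapWitness_relator, Ne, commutatorElement_eq_one_iff_commute]
  intro h
  have := congrArg (· 0) h.eq
  simp [Equiv.swap_apply_def] at this

open Subgroup in
theorem not_isFinitelyNormallyGenerated_normalClosure_relator :
    ¬ (normalClosure (Set.range relator)).IsFinitelyNormallyGenerated := by
  intro h
  obtain ⟨s, hs⟩ := exists_finset_normalClosure_image_eq relator h
  obtain ⟨N, hN⟩ := s.bddAbove
  have hle : normalClosure (Set.range relator) ≤ (swapWitness N).ker := by
    rw [← hs]
    refine normalClosure_le_normal ?_
    rintro _ ⟨n, hn, rfl⟩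
    exact swapWitness_relator_of_le (hN hn)
  exact swapWitness_relator_succ_ne_one N (hle (subset_normalClosure ⟨N + 1, rfl⟩))

theorem F2_times_F2_not_coherent :
    ¬ IsCoherentGroup (FreeGroup (Fin 2) × FreeGroup (Fin 2)) := by
  intro hcoh
  set π := FreePairByCyclic.toFreeGroupProd.comp FreePairByCyclic.ofFree
  have hπ : π.ker = Subgroup.normalClosure (Set.range relator) := by
    rw [MonoidHom.ker_comp_of_injective _ _ FreePairByCyclic.toFreeGroupProd_injective,
      FreePairByCyclic.ker_ofFree]
  have hfp : Group.IsFinitelyPresented π.range :=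
    (hcoh π.range (Group.fg_range π)).isFinitelyPresented
  apply not_isFinitelyNormallyGenerated_normalClosure_relator
  rw [← hπ, ← π.ker_rangeRestrict]
  exact hfp.isFinitelyNormallyGenerated_ker _ π.rangeRestrict_surjective
end

section
/- Let G be a group and suppose N = ⋂{ M ⊴ G : [G:M] < ∞ } is the intersection of all finite index normal subgroups of G, and suppose N itself has finite index in G. Then N has no proper subgroup of finite index. -/
namespace Subgroup

variable {G : Type*} [Group G]

theorem iInf_normal_finiteIndex_le (K : Subgroup G) [K.FiniteIndex] :
    ⨅ (M : Subgroup G) (_ : M.Normal) (_ : M.FiniteIndex), M ≤ K :=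
  (iInf₂_le_of_le K.normalCore K.normalCore_normal (iInf_le _ K.finiteIndex_normalCore)).trans
    K.normalCore_le

theorem finiteIndex_map_subtype {N : Subgroup G} [N.FiniteIndex] (H : Subgroup N)
    [H.FiniteIndex] : (H.map N.subtype).FiniteIndex :=
  ⟨by rw [index_map_subtype]; exact mul_ne_zero FiniteIndex.index_ne_zero FiniteIndex.index_ne_zero⟩

theorem eq_top_of_le_map_subtype {N : Subgroup G} {H : Subgroup N}
    (h : N ≤ H.map N.subtype) : H = ⊤ := by
  rw [eq_top_iff, ← map_subtype_le_map_subtype, ← MonoidHom.range_eq_map, range_subtype]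
  exact h

end Subgroup

theorem inter_finite_index_normals_no_proper_finite_index
    (G : Type*) [Group G] (N : Subgroup G)
    (hN : N = ⨅ (M : Subgroup G) (_ : M.Normal) (_ : M.FiniteIndex), M)
    (hfi : N.FiniteIndex)
    (H : Subgroup N) (hH : H.FiniteIndex) : H = ⊤ := by
  have : (H.map N.subtype).FiniteIndex := Subgroup.finiteIndex_map_subtype H
  exact Subgroup.eq_top_of_le_map_subtype
    (hN.le.trans (H.map N.subtype).iInf_normal_finiteIndex_le)
end
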